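/- Let $X_t$ take values in $[0,\infty)$ with $X_0=x$ a.s. under $\mathbb{P}^x$, and suppose that $\mu$ is an invariant probability measure, i.e. $\int \mathbb{E}^x[e^{-\xi X_t}]\,\mu(dx)=\int e^{-\xi x}\,\mu(dx)$ for all $t,\xi\geq 0$. Suppose further that the functions $h_\xi(x,t)=\frac{\mathbb{E}^x[e^{-(X_t-x)\xi}]-1}{t}$ are uniformly bounded in $(x,t)$ for each $\xi$ and converge pointwise as $t\downarrow 0$ to $-\lambda(x,\xi)$. Then $\int_{[0,\infty)} e^{-x\xi}\,\lambda(x,\xi)\,\mu(dx)=0$ for all $\xi\geq 0$. -/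
import Mathlib


open MeasureTheory Real Filter Set

/-- Necessity of the one-sided symbol invariance criterion: if `μ` is invariant for a
nonnegative process `X`, the functions `h_ξ(x,t) = (E^x[e^{-(X_t-x)ξ}]-1)/t` are uniformly
bounded and converge to `-λ(x,ξ)` as `t ↓ 0`, then `∫ e^{-xξ} λ(x,ξ) μ(dx) = 0`. -/
theorem invariance_criterion_necessity
    {Ω : Type*} [MeasurableSpace Ω]
    (P : ℝ → Measure Ω) (hP : ∀ x, IsProbabilityMeasure (P x))
    (X : ℝ → Ω → ℝ)
    (hXpos : ∀ t : ℝ, 0 ≤ t → ∀ ω, 0 ≤ X t ω)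
    (hX0 : ∀ x : ℝ, 0 ≤ x → (∀ᵐ ω ∂(P x), X 0 ω = x))
    (μ : Measure ℝ) [IsProbabilityMeasure μ] (hsupp : μ (Iio 0) = 0)
    (hinv : ∀ t : ℝ, 0 ≤ t → ∀ ξ : ℝ, 0 ≤ ξ →
      (∫ x, (∫ ω, Real.exp (-ξ * X t ω) ∂(P x)) ∂μ) = ∫ x, Real.exp (-ξ * x) ∂μ)
    (h : ℝ → ℝ → ℝ → ℝ)
    (hdef : ∀ ξ x t : ℝ, 0 < t →
      h ξ x t = ((∫ ω, Real.exp (-(X t ω - x) * ξ) ∂(P x)) - 1) / t)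
    (hbdd : ∀ ξ : ℝ, 0 ≤ ξ → ∃ C : ℝ, ∀ x t : ℝ, 0 ≤ x → 0 < t → |h ξ x t| ≤ C)
    (lam : ℝ → ℝ → ℝ)
    (hlim : ∀ ξ : ℝ, 0 ≤ ξ → ∀ x : ℝ, 0 ≤ x →
      Tendsto (fun t => h ξ x t) (nhdsWithin 0 (Ioi 0)) (nhds (-(lam x ξ)))) :
    ∀ ξ : ℝ, 0 ≤ ξ → (∫ x, Real.exp (-x * ξ) * lam x ξ ∂μ) = 0 := by
  intro ξ hξ
  -- a.e. nonnegativity of x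
  have hx0 : ∀ᵐ x ∂μ, 0 ≤ x := by
    rw [ae_iff]
    convert hsupp using 2
    ext x; simp [not_le]
  -- integrability of the Laplace kernel
  have hexp_meas : AEStronglyMeasurable (fun x : ℝ => Real.exp (-ξ * x)) μ :=
    (Real.continuous_exp.comp (continuous_const.mul continuous_id)).aestronglyMeasurable
  have hexp_int : Integrable (fun x : ℝ => Real.exp (-ξ * x)) μ := by
    refine Integrable.mono' (integrable_const 1) hexp_meas ?_
    filter_upwards [hx0] with x hx
    rw [Real.norm_eq_abs, abs_of_pos (Real.exp_pos _)]
    calc Real.exp (-ξ * x) ≤ Real.exp 0 := by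
          apply Real.exp_le_exp.2
          nlinarith
      _ = 1 := Real.exp_zero
  have hexp_pos : 0 < ∫ x, Real.exp (-ξ * x) ∂μ := by
    rw [integral_pos_iff_support_of_nonneg_ae
      (Filter.Eventually.of_forall fun x => (Real.exp_pos _).le) hexp_int]
    have : Function.support (fun x : ℝ => Real.exp (-ξ * x)) = Set.univ := by
      ext x; simp [Function.support, (Real.exp_pos (-ξ * x)).ne']
    rw [this]
    simp
  -- integrability of f_t
  set f : ℝ → ℝ → ℝ := fun t x => ∫ ω, Real.exp (-ξ * X t ω) ∂(P x) with hf
  have hft_int : ∀ t : ℝ, 0 < t → Integrable (f t) μ := by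
    intro t ht
    by_contra hni
    have h2 := hinv t ht.le ξ hξ
    rw [integral_undef hni] at h2
    exact absurd h2.symm (ne_of_gt hexp_pos)
  -- rewriting h in terms of f
  have hkey : ∀ t : ℝ, 0 < t → ∀ x : ℝ,
      Real.exp (-x * ξ) * h ξ x t = (f t x - Real.exp (-x * ξ)) / t := by
    intro t ht x
    have hint : (∫ ω, Real.exp (-(X t ω - x) * ξ) ∂(P x))
        = Real.exp (x * ξ) * f t x := by
      rw [hf, ← integral_const_mul]
      congr 1
      ext ω
      rw [← Real.exp_add]
      ring_nf
    have hee : Real.exp (-x * ξ) * Real.exp (x * ξ) = 1 := by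
      rw [← Real.exp_add]; ring_nf; exact Real.exp_zero
    rw [hdef ξ x t ht, hint, ← mul_div_assoc]
    congr 1
    linear_combination (f t x) * hee
  -- the integral of exp(-xξ) h is zero for every t > 0
  have hzero : ∀ t : ℝ, 0 < t →
      (∫ x, Real.exp (-x * ξ) * h ξ x t ∂μ) = 0 := by
    intro t ht
    have : (fun x => Real.exp (-x * ξ) * h ξ x t)
        = fun x => (f t x - Real.exp (-ξ * x)) / t := by
      ext x
      rw [hkey t ht x]
      ring_nf
    rw [this, integral_div, integral_sub (hft_int t ht) hexp_int, hinv t ht.le ξ hξ]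
    simp
  -- dominated convergence
  obtain ⟨C, hC⟩ := hbdd ξ hξ
  have hC0 : 0 ≤ C := le_trans (abs_nonneg _) (hC 0 1 le_rfl one_pos)
  have hdc : Tendsto (fun t => ∫ x, Real.exp (-x * ξ) * h ξ x t ∂μ)
      (nhdsWithin 0 (Ioi 0)) (nhds (∫ x, Real.exp (-x * ξ) * (-(lam x ξ)) ∂μ)) := by
    refine tendsto_integral_filter_of_dominated_convergence (fun _ => C) ?_ ?_
      (integrable_const C) ?_
    · filter_upwards [self_mem_nhdsWithin] with t ht
      have : (fun x => Real.exp (-x * ξ) * h ξ x t)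
          = fun x => (f t x - Real.exp (-ξ * x)) / t := by
        ext x; rw [hkey t ht x]; ring_nf
      rw [this]
      simp_rw [div_eq_mul_inv]
      exact ((hft_int t ht).1.sub hexp_meas).mul_const _
    · filter_upwards [self_mem_nhdsWithin] with t ht
      filter_upwards [hx0] with x hx
      rw [Real.norm_eq_abs, abs_mul, abs_of_pos (Real.exp_pos _)]
      calc Real.exp (-x * ξ) * |h ξ x t| ≤ 1 * |h ξ x t| := by
            apply mul_le_mul_of_nonneg_right _ (abs_nonneg _)
            calc Real.exp (-x * ξ) ≤ Real.exp 0 := by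
                  apply Real.exp_le_exp.2; nlinarith
              _ = 1 := Real.exp_zero
        _ = |h ξ x t| := one_mul _
        _ ≤ C := hC x t hx ht
    · filter_upwards [hx0] with x hx
      exact ((hlim ξ hξ x hx).const_mul _)
  have heq : (fun t => ∫ x, Real.exp (-x * ξ) * h ξ x t ∂μ)
      =ᶠ[nhdsWithin 0 (Ioi 0)] fun _ => (0 : ℝ) := by
    filter_upwards [self_mem_nhdsWithin] with t ht
    exact hzero t ht
  have hlim0 : (∫ x, Real.exp (-x * ξ) * (-(lam x ξ)) ∂μ) = 0 := by
    have := (Filter.Tendsto.congr' heq hdc)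
    exact tendsto_nhds_unique this tendsto_const_nhds
  have : (∫ x, Real.exp (-x * ξ) * lam x ξ ∂μ)
      = -∫ x, Real.exp (-x * ξ) * (-(lam x ξ)) ∂μ := by
    rw [← integral_neg]
    congr 1; ext x; ring
  rw [this, hlim0, neg_zero]
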